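/- Let M_1, ..., M_n be closed affine subspaces of a real Hilbert space H with M := ∩_{i=1}^n M_i nonempty. Let Q := P_{M_n} ⋯ P_{M_1}, Q_i := P_{M_i} ⋯ P_{M_1} for i ∈ {1,...,n}, and Q_0 := I. Then for every x ∈ H and every x_0 ∈ H, ⟨x − Q(x), P_M(x_0)⟩ = (1/2)‖x‖² − (1/2)‖Q(x)‖² − (1/2) Σ_{i=1}^n ‖Q_{i−1}(x) − Q_i(x)‖². -/

import Mathlib

/-!
Each `Qᵢ x = P_{Mᵢ}(Q_{i-1} x)` is an orthogonal projection onto an affine subspace containing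
`m := P_M x₀`, so `Q_{i-1} x - Qᵢ x ⟂ m - Qᵢ x`, and the polarization identity turns
`⟪Q_{i-1} x - Qᵢ x, m⟫` into `½‖Q_{i-1} x‖² - ½‖Qᵢ x‖² - ½‖Q_{i-1} x - Qᵢ x‖²`.
Summing over `i`, both `x - Q x` and the squared norms telescope.
-/

open RealInnerProductSpace

/-- `P` is the nearest-point projector onto the set `S`. -/
def IsProjOn {H : Type*} [NormedAddCommGroup H] [InnerProductSpace ℝ H]
    (S : Set H) (P : H → H) : Prop :=
  ∀ x, P x ∈ S ∧ ∀ y ∈ S, ‖x - P x‖ ≤ ‖x - y‖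

theorem Finset.sum_Icc_one_sub_pred {G : Type*} [AddCommGroup G] (f : ℕ → G) (n : ℕ) :
    ∑ i ∈ Finset.Icc 1 n, (f (i - 1) - f i) = f 0 - f n := by
  induction n with
  | zero => simp
  | succ n ih =>
    rw [Finset.sum_Icc_succ_top (by omega), ih, Nat.add_sub_cancel]
    abel

section Projection

variable {H : Type*} [NormedAddCommGroup H] [InnerProductSpace ℝ H]

theorem IsProjOn.norm_sub_eq_iInf {S : Set H} {P : H → H} (hP : IsProjOn S P) (u : H) :
    ‖u - P u‖ = ⨅ w : S, ‖u - w‖ := by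
  have : Nonempty S := ⟨⟨P u, (hP u).1⟩⟩
  refine le_antisymm (le_ciInf fun w => (hP u).2 w w.2) ?_
  exact ciInf_le ⟨0, by rintro _ ⟨w, rfl⟩; exact norm_nonneg _⟩ (⟨P u, (hP u).1⟩ : S)

theorem IsProjOn.inner_sub_le_zero {S : Set H} (hS : Convex ℝ S) {P : H → H}
    (hP : IsProjOn S P) (u : H) {w : H} (hw : w ∈ S) : ⟪u - P u, w - P u⟫ ≤ 0 :=
  (norm_eq_iInf_iff_real_inner_le_zero hS (hP u).1).1 (hP.norm_sub_eq_iInf u) w hw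

theorem IsProjOn.inner_sub_eq_zero {S : AffineSubspace ℝ H} {P : H → H}
    (hP : IsProjOn (S : Set H) P) (u : H) {w : H} (hw : w ∈ S) : ⟪u - P u, w - P u⟫ = 0 := by
  have hPu : P u ∈ S := (hP u).1
  -- `S` also contains the reflection of `w` through `P u`, which reverses the sign of the inequality
  have hw' : (-1 : ℝ) • (w -ᵥ P u) +ᵥ P u ∈ S := S.smul_vsub_vadd_mem (-1) hw hPu hPu
  have hle := hP.inner_sub_le_zero S.convex u hw
  have hge := hP.inner_sub_le_zero S.convex u hw'
  simp only [vsub_eq_sub, vadd_eq_add, add_sub_cancel_right, neg_one_smul,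
    inner_neg_right] at hge
  linarith

theorem real_inner_sub_eq_of_inner_sub_sub_eq_zero {u v m : H} (h : ⟪u - v, m - v⟫ = 0) :
    ⟪u - v, m⟫ = (1 / 2) * ‖u‖ ^ 2 - (1 / 2) * ‖v‖ ^ 2 - (1 / 2) * ‖u - v‖ ^ 2 := by
  rw [inner_sub_right, inner_sub_left, inner_sub_left, real_inner_self_eq_norm_sq] at h
  rw [norm_sub_sq_real, inner_sub_left]
  linarith

end Projection

theorem cyclic_projections_inner_formula_general
    {H : Type*} [NormedAddCommGroup H] [InnerProductSpace ℝ H]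
    (n : ℕ)
    (M : ℕ → AffineSubspace ℝ H)
    (P : ℕ → H → H)
    (hP : ∀ i ∈ Finset.Icc 1 n, IsProjOn (M i : Set H) (P i))
    (PM : H → H)
    (hPM : IsProjOn (⋂ i ∈ Finset.Icc 1 n, (M i : Set H)) PM)
    (Q : ℕ → H → H)
    (hQ0 : Q 0 = id)
    (hQ : ∀ i, 1 ≤ i → i ≤ n → Q i = P i ∘ Q (i - 1))
    (x0 : H) (x : H) :
    ⟪x - Q n x, PM x0⟫
      = (1 / 2) * ‖x‖ ^ 2 - (1 / 2) * ‖Q n x‖ ^ 2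
        - (1 / 2) * ∑ i ∈ Finset.Icc 1 n, ‖Q (i - 1) x - Q i x‖ ^ 2 := by
  have hmem : ∀ i ∈ Finset.Icc 1 n, PM x0 ∈ M i := Set.mem_iInter₂.1 (hPM x0).1
  have hstep : ∀ i ∈ Finset.Icc 1 n, ⟪Q (i - 1) x - Q i x, PM x0⟫
      = (1 / 2) * ‖Q (i - 1) x‖ ^ 2 - (1 / 2) * ‖Q i x‖ ^ 2
        - (1 / 2) * ‖Q (i - 1) x - Q i x‖ ^ 2 := by
    intro i hi
    have hQi : Q i x = P i (Q (i - 1) x) := by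
      obtain ⟨h1, hn⟩ := Finset.mem_Icc.1 hi
      rw [hQ i h1 hn, Function.comp_apply]
    rw [hQi]
    exact real_inner_sub_eq_of_inner_sub_sub_eq_zero ((hP i hi).inner_sub_eq_zero _ (hmem i hi))
  calc ⟪x - Q n x, PM x0⟫
      = ∑ i ∈ Finset.Icc 1 n, ⟪Q (i - 1) x - Q i x, PM x0⟫ := by
        rw [← sum_inner, Finset.sum_Icc_one_sub_pred (Q · x), hQ0, id]
    _ = ∑ i ∈ Finset.Icc 1 n, ((1 / 2) * ‖Q (i - 1) x‖ ^ 2 - (1 / 2) * ‖Q i x‖ ^ 2)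
          - (1 / 2) * ∑ i ∈ Finset.Icc 1 n, ‖Q (i - 1) x - Q i x‖ ^ 2 := by
        rw [Finset.sum_congr rfl hstep, Finset.sum_sub_distrib, Finset.mul_sum]
    _ = _ := by
        rw [Finset.sum_Icc_one_sub_pred (fun i => (1 / 2) * ‖Q i x‖ ^ 2), hQ0, id]

/-- For closed affine subspaces `M₁, …, Mₙ` with `M = ∩ᵢ Mᵢ ≠ ∅`,
`Q = P_{Mₙ} ⋯ P_{M₁}` and partial compositions `Qᵢ = P_{Mᵢ} ⋯ P_{M₁}` (`Q₀ = I`),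
one has `⟨x − Q x, P_M x₀⟩ = ½‖x‖² − ½‖Q x‖² − ½ Σᵢ ‖Q_{i−1} x − Qᵢ x‖²`. -/
theorem cyclic_projections_inner_formula
    {H : Type*} [NormedAddCommGroup H] [InnerProductSpace ℝ H] [CompleteSpace H]
    (n : ℕ) (hn : 1 ≤ n)
    (M : ℕ → AffineSubspace ℝ H)
    (hclosed : ∀ i ∈ Finset.Icc 1 n, IsClosed (M i : Set H))
    (hne : (⋂ i ∈ Finset.Icc 1 n, (M i : Set H)).Nonempty)
    (P : ℕ → H → H)
    (hP : ∀ i ∈ Finset.Icc 1 n, IsProjOn (M i : Set H) (P i))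
    (PM : H → H)
    (hPM : IsProjOn (⋂ i ∈ Finset.Icc 1 n, (M i : Set H)) PM)
    (Q : ℕ → H → H)
    (hQ0 : Q 0 = id)
    (hQ : ∀ i, 1 ≤ i → i ≤ n → Q i = P i ∘ Q (i - 1))
    (x0 : H) (x : H) :
    ⟪x - Q n x, PM x0⟫
      = (1 / 2) * ‖x‖ ^ 2 - (1 / 2) * ‖Q n x‖ ^ 2
        - (1 / 2) * ∑ i ∈ Finset.Icc 1 n, ‖Q (i - 1) x - Q i x‖ ^ 2 :=
  cyclic_projections_inner_formula_general n M P hP PM hPM Q hQ0 hQ x0 x
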